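/- arXiv:1310.7654 — 2 statements merged into one kernel-verified Lean document; each statement's English description precedes it below -/
import Mathlib

section
/- Fix ε, α ∈ (0,1) and δ ≥ 0, and let T be the test that, on k observed action profiles, outputs YES if the product empirical distribution of play ∏_{i∈[n]} s_i^k is a (δ + ε/2)-Nash equilibrium and NO otherwise. If k > (72/ε²)(ln(m+1) + ln n − ln α − ln ε + ln 24), then T is an ε-test that has error probability α for δ-Nash equilibrium: for every product distribution x, if x is a δ-Nash equilibrium then T outputs YES with probability at least 1 − α, and if x is not a (δ+ε)-Nash equilibrium then T outputs NO with probability at least 1 − α (probabilities over k i.i.d. samples from x). -/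
/-!
Fix a payoff `w ∈ [0,1]` (some `u i`, or `u i` with player `i` switched to a pure action `b`).
Its expectation under the product of the empirical distributions is a U-statistic: averaging
over independent cyclic shifts `t ↦ t + c j` of the sample index in each coordinate `j` writes
it as an average of means of `k` i.i.d. copies of `w`. Jensen for `exp` and `e^y ≤ 1 + y + y²`
then bound its moment generating function by `exp (k θ²)`, so by Chernoff each of the `n (m + 1)`
estimates is `ε/4`-accurate except with probability `2 exp (-k ε² / 64)`, and the lower bound
on `k` makes the union of these failures have probability at most `α`. When all estimates are
accurate, the gain of every deviation under `x` and under the empirical product differ by at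
most `ε/2`, which yields both halves of the theorem.
-/

open Finset

open scoped Classical

noncomputable section

/-- `x` is a probability distribution on the finite type `A`. -/
def IsDist {A : Type*} [Fintype A] (x : A → ℝ) : Prop :=
  (∀ a, 0 ≤ x a) ∧ ∑ a, x a = 1

/-- Probability of the pure action profile `a` under the product distribution `x`. -/
def prodProb {n m : ℕ} (x : Fin n → Fin m → ℝ) (a : Fin n → Fin m) : ℝ :=
  ∏ i, x i (a i)

/-- Expected utility of the payoff function `u` under the product distribution `x`. -/
def EU {n m : ℕ} (u : (Fin n → Fin m) → ℝ) (x : Fin n → Fin m → ℝ) : ℝ :=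
  ∑ a, prodProb x a * u a

/-- The point mass (pure strategy) at action `b`. -/
def pureStrat {m : ℕ} (b : Fin m) : Fin m → ℝ := fun c => if c = b then 1 else 0

/-- `x` is an `ε`-Nash equilibrium of the game `u`: no player gains more than `ε`
by deviating to any pure action. -/
def IsNash {n m : ℕ} (u : Fin n → (Fin n → Fin m) → ℝ) (x : Fin n → Fin m → ℝ)
    (ε : ℝ) : Prop :=
  ∀ (i : Fin n) (b : Fin m),
    EU (u i) x ≥ EU (u i) (Function.update x i (pureStrat b)) - ε

/-- Empirical distribution of player `i` given `k` sampled action profiles. -/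
def emp {n m : ℕ} (k : ℕ) (a : Fin k → Fin n → Fin m) (i : Fin n) : Fin m → ℝ :=
  fun b => ((univ.filter fun t => a t i = b).card : ℝ) / k

/-- Probability of the event `E` over `k` i.i.d. samples from the product distribution `x`. -/
def PrProd {n m : ℕ} (k : ℕ) (x : Fin n → Fin m → ℝ)
    (E : (Fin k → Fin n → Fin m) → Prop) : ℝ :=
  ∑ a : Fin k → Fin n → Fin m, if E a then ∏ t, prodProb x (a t) else 0

open Real

section SampleSum

variable {Ω : Type*} [Fintype Ω] {p : Ω → ℝ} {w : Ω → ℝ}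

theorem exp_le_one_add_add_sq {y : ℝ} (hy : |y| ≤ 1) : exp y ≤ 1 + y + y ^ 2 := by
  linarith [(abs_le.1 (abs_exp_sub_one_sub_id_le hy)).2]

theorem IsDist.pi (hp : IsDist p) (k : ℕ) : IsDist fun a : Fin k → Ω => ∏ t, p (a t) :=
  ⟨fun a => prod_nonneg fun t _ => hp.1 (a t), by
    rw [← Fintype.prod_sum, hp.2, prod_const_one]⟩

theorem sum_mul_exp_sub_mean_le (hp : IsDist p) (hw : ∀ ω, w ω ∈ Set.Icc (0 : ℝ) 1)
    {θ : ℝ} (hθ : |θ| ≤ 1) :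
    ∑ ω, p ω * exp (θ * (w ω - ∑ ω', p ω' * w ω')) ≤ exp (θ ^ 2) := by
  obtain ⟨μ, hμdef⟩ : ∃ μ, μ = ∑ ω', p ω' * w ω' := ⟨_, rfl⟩
  rw [← hμdef]
  have hμ : μ ∈ Set.Icc (0 : ℝ) 1 := by
    refine ⟨hμdef ▸ sum_nonneg fun ω _ => mul_nonneg (hp.1 ω) (hw ω).1, ?_⟩
    calc μ = ∑ ω, p ω * w ω := hμdef
      _ ≤ ∑ ω, p ω := sum_le_sum fun ω _ => mul_le_of_le_one_right (hp.1 ω) (hw ω).2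
      _ = 1 := hp.2
  have hpoint : ∀ ω, exp (θ * (w ω - μ)) ≤ 1 + θ * (w ω - μ) + θ ^ 2 := by
    intro ω
    have hd : |w ω - μ| ≤ 1 :=
      abs_sub_le_iff.2 ⟨by linarith [(hw ω).2, hμ.1], by linarith [(hw ω).1, hμ.2]⟩
    have hsq : (θ * (w ω - μ)) ^ 2 ≤ θ ^ 2 := by
      rw [mul_pow, ← sq_abs (w ω - μ)]
      exact mul_le_of_le_one_right (sq_nonneg θ) (pow_le_one₀ (abs_nonneg _) hd)
    have := exp_le_one_add_add_sq (y := θ * (w ω - μ))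
      (by rw [abs_mul]; exact mul_le_one₀ hθ (abs_nonneg _) hd)
    linarith
  calc ∑ ω, p ω * exp (θ * (w ω - μ))
      ≤ ∑ ω, p ω * (1 + θ * (w ω - μ) + θ ^ 2) :=
        sum_le_sum fun ω _ => mul_le_mul_of_nonneg_left (hpoint ω) (hp.1 ω)
    _ = (∑ ω, p ω) * (1 + θ ^ 2) + θ * (∑ ω, p ω * w ω) - θ * μ * ∑ ω, p ω := by
        rw [mul_sum, mul_sum, sum_mul, ← sum_add_distrib, ← sum_sub_distrib]
        exact sum_congr rfl fun ω _ => by ring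
    _ = 1 + θ ^ 2 := by rw [← hμdef, hp.2]; ring
    _ ≤ exp (θ ^ 2) := by linarith [add_one_le_exp (θ ^ 2)]

theorem sum_prod_mul_exp_sum_sub_mean_le (hp : IsDist p) (hw : ∀ ω, w ω ∈ Set.Icc (0 : ℝ) 1)
    (k : ℕ) {θ : ℝ} (hθ : |θ| ≤ 1) :
    ∑ a : Fin k → Ω, (∏ t, p (a t)) * exp (θ * ∑ t, (w (a t) - ∑ ω, p ω * w ω)) ≤
      exp (k * θ ^ 2) := by
  calc ∑ a : Fin k → Ω, (∏ t, p (a t)) * exp (θ * ∑ t, (w (a t) - ∑ ω, p ω * w ω))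
      = ∏ _t : Fin k, ∑ ω, p ω * exp (θ * (w ω - ∑ ω', p ω' * w ω')) := by
        rw [Fintype.prod_sum]
        refine sum_congr rfl fun a _ => ?_
        rw [mul_sum, exp_sum, ← prod_mul_distrib]
    _ ≤ ∏ _t : Fin k, exp (θ ^ 2) :=
        prod_le_prod (fun _ _ => sum_nonneg fun ω _ => mul_nonneg (hp.1 ω) (exp_pos _).le)
          fun _ _ => sum_mul_exp_sub_mean_le hp hw hθ
    _ = exp (k * θ ^ 2) := by rw [prod_const, card_univ, Fintype.card_fin, ← exp_nat_mul]

end SampleSum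

theorem exp_sum_div_card_le {ι : Type*} [Fintype ι] [Nonempty ι] (z : ι → ℝ) :
    exp ((∑ c, z c) / Fintype.card ι) ≤ (∑ c, exp (z c)) / Fintype.card ι := by
  have hcard : (0 : ℝ) < Fintype.card ι := Nat.cast_pos.2 Fintype.card_pos
  have h := convexOn_exp.map_sum_le (t := univ) (w := fun _ => (Fintype.card ι : ℝ)⁻¹) (p := z)
    (fun _ _ => by positivity) (by simp [hcard.ne']) (fun _ _ => Set.mem_univ _)
  simpa only [smul_eq_mul, inv_mul_eq_div, ← sum_div] using h

theorem sum_ite_lt_le_exp_mul_sum {α : Type*} [Fintype α] {W : α → ℝ} (hW : ∀ a, 0 ≤ W a)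
    (Z : α → ℝ) (s : ℝ) {c : ℝ} (hc : 0 ≤ c) :
    ∑ a, (if s < Z a then W a else 0) ≤ exp (-(c * s)) * ∑ a, W a * exp (c * Z a) := by
  rw [mul_sum]
  refine sum_le_sum fun a _ => ?_
  split_ifs with h
  · rw [mul_left_comm, ← exp_add]
    exact le_mul_of_one_le_right (hW a) (one_le_exp (by nlinarith))
  · exact mul_nonneg (exp_pos _).le (mul_nonneg (hW a) (exp_pos _).le)

section Game

variable {n m : ℕ}

theorem isDist_prodProb {x : Fin n → Fin m → ℝ} (hx : ∀ i, IsDist (x i)) :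
    IsDist (prodProb x) :=
  ⟨fun p => prod_nonneg fun i _ => (hx i).1 (p i), by
    simp only [prodProb, ← Fintype.prod_sum, (hx _).2, prod_const_one]⟩

theorem EU_pureStrat (w : (Fin n → Fin m) → ℝ) (p : Fin n → Fin m) :
    EU w (fun i => pureStrat (p i)) = w p := by
  have hprob : ∀ b, prodProb (fun i => pureStrat (p i)) b = if b = p then 1 else 0 := by
    intro b
    simp only [prodProb, pureStrat, prod_boole, mem_univ, true_implies, funext_iff]
  simp [EU, hprob]

theorem emp_eq_sum_pureStrat (k : ℕ) (a : Fin k → Fin n → Fin m) (i : Fin n) :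
    emp k a i = fun b => (∑ t, pureStrat (a t i) b) / k := by
  ext b
  simp only [emp, pureStrat, card_filter, Nat.cast_sum, Nat.cast_ite, Nat.cast_one, Nat.cast_zero,
    @eq_comm _ b]

theorem EU_emp (k : ℕ) (w : (Fin n → Fin m) → ℝ) (a : Fin k → Fin n → Fin m) :
    EU w (emp k a) = (∑ τ : Fin n → Fin k, w (fun j => a (τ j) j)) / k ^ n := by
  have hprob : ∀ b, prodProb (emp k a) b =
      (∑ τ : Fin n → Fin k, prodProb (fun j => pureStrat (a (τ j) j)) b) / k ^ n := by
    intro b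
    simp only [prodProb, emp_eq_sum_pureStrat, prod_div_distrib, prod_const, card_univ,
      Fintype.card_fin, Fintype.prod_sum]
  simp only [EU, hprob, div_mul_eq_mul_div, sum_mul, ← sum_div]
  rw [sum_comm]
  exact congrArg (· / _) (sum_congr rfl fun τ _ => EU_pureStrat w _)

theorem EU_eq_sum_funSplitAt (g : (Fin n → Fin m) → ℝ) (y : Fin n → Fin m → ℝ) (i : Fin n) :
    EU g y = ∑ v, ∑ r : {j // j ≠ i} → Fin m,
      y i v * (∏ j : {j // j ≠ i}, y j (r j)) * g ((Equiv.funSplitAt i (Fin m)).symm (v, r)) := by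
  rw [EU, ← (Equiv.funSplitAt i (Fin m)).symm.sum_comp, Fintype.sum_prod_type]
  refine sum_congr rfl fun v _ => sum_congr rfl fun r _ => ?_
  rw [prodProb, Fintype.prod_eq_mul_prod_subtype_ne _ i]
  have hi : (Equiv.funSplitAt i (Fin m)).symm (v, r) i = v := by simp
  have hj : ∀ j : {j // j ≠ i}, (Equiv.funSplitAt i (Fin m)).symm (v, r) j = r j := fun j => by
    simp [j.2]
  simp only [hi, hj]

theorem EU_update_pureStrat (g : (Fin n → Fin m) → ℝ) {y : Fin n → Fin m → ℝ} {i : Fin n}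
    (hy : ∑ v, y i v = 1) (b : Fin m) :
    EU g (Function.update y i (pureStrat b)) = EU (fun p => g (Function.update p i b)) y := by
  have hS : ∀ v r, Function.update ((Equiv.funSplitAt i (Fin m)).symm (v, r)) i b =
      (Equiv.funSplitAt i (Fin m)).symm (b, r) := fun v r => by
    ext j
    by_cases hj : j = i
    · subst hj; simp
    · simp [hj]
  have hR : ∀ r : {j // j ≠ i} → Fin m,
      ∏ j : {j // j ≠ i}, Function.update y i (pureStrat b) j (r j) =
        ∏ j : {j // j ≠ i}, y j (r j) :=
    fun r => prod_congr rfl fun j _ => by rw [Function.update_of_ne j.2]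
  rw [EU_eq_sum_funSplitAt _ _ i, EU_eq_sum_funSplitAt _ _ i]
  simp only [Function.update_self, hR, hS, mul_assoc, ← mul_sum, ← sum_mul, hy, one_mul]
  simp [pureStrat]

theorem emp_sum_eq_one {k : ℕ} (hk : k ≠ 0) (a : Fin k → Fin n → Fin m) (i : Fin n) :
    ∑ b, emp k a i b = 1 := by
  simp only [emp_eq_sum_pureStrat, ← sum_div]
  rw [sum_comm]
  simp [pureStrat, hk]

theorem IsNash.mono {u : Fin n → (Fin n → Fin m) → ℝ} {x : Fin n → Fin m → ℝ} {δ δ' : ℝ}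
    (h : IsNash u x δ) (hδ : δ ≤ δ') : IsNash u x δ' :=
  fun i b => le_trans (by linarith) (h i b)

def nashTestPayoff (u : Fin n → (Fin n → Fin m) → ℝ) :
    Fin n × Option (Fin m) → (Fin n → Fin m) → ℝ
  | (i, none) => u i
  | (i, some b) => fun p => u i (Function.update p i b)

theorem nashTestPayoff_mem_Icc {u : Fin n → (Fin n → Fin m) → ℝ}
    (hu : ∀ i a, 0 ≤ u i a ∧ u i a ≤ 1) (q : Fin n × Option (Fin m)) (p : Fin n → Fin m) :
    nashTestPayoff u q p ∈ Set.Icc (0 : ℝ) 1 := by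
  obtain ⟨i, _ | b⟩ := q
  exacts [hu i p, hu i _]

theorem IsNash.of_abs_EU_sub_le {u : Fin n → (Fin n → Fin m) → ℝ} {y z : Fin n → Fin m → ℝ}
    {δ η : ℝ} (hy : ∀ i, ∑ v, y i v = 1) (hz : ∀ i, ∑ v, z i v = 1)
    (hclose : ∀ q, |EU (nashTestPayoff u q) y - EU (nashTestPayoff u q) z| ≤ η)
    (h : IsNash u y δ) : IsNash u z (δ + 2 * η) := by
  intro i b
  have hstay := abs_le.1 (hclose (i, none))
  have hdev := abs_le.1 (hclose (i, some b))
  have hnash := h i b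
  dsimp only [nashTestPayoff] at hstay hdev
  rw [EU_update_pureStrat _ (hy i)] at hnash
  rw [EU_update_pureStrat _ (hz i)]
  linarith [hstay.1, hstay.2, hdev.1, hdev.2]

end Game

section Resampling

variable {n m k : ℕ}

def permuteSamples (σ : Fin n → Equiv.Perm (Fin k)) :
    (Fin k → Fin n → Fin m) ≃ (Fin k → Fin n → Fin m) where
  toFun a t j := a (σ j t) j
  invFun a t j := a ((σ j).symm t) j
  left_inv a := by ext t j; simp
  right_inv a := by ext t j; simp

theorem prod_prodProb_permuteSamples (x : Fin n → Fin m → ℝ) (σ : Fin n → Equiv.Perm (Fin k))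
    (a : Fin k → Fin n → Fin m) :
    ∏ t, prodProb x (permuteSamples σ a t) = ∏ t, prodProb x (a t) := by
  calc ∏ t, prodProb x (permuteSamples σ a t)
      = ∏ j, ∏ t, x j (a (σ j t) j) := prod_comm
    _ = ∏ j, ∏ t, x j (a t j) :=
        prod_congr rfl fun j _ => Equiv.prod_comp (σ j) fun t => x j (a t j)
    _ = ∏ t, prodProb x (a t) := prod_comm

theorem sum_prod_prodProb_mul_comp_permuteSamples (x : Fin n → Fin m → ℝ)
    (σ : Fin n → Equiv.Perm (Fin k)) (G : (Fin k → Fin n → Fin m) → ℝ) :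
    ∑ a, (∏ t, prodProb x (a t)) * G (permuteSamples σ a) = ∑ a, (∏ t, prodProb x (a t)) * G a := by
  calc ∑ a, (∏ t, prodProb x (a t)) * G (permuteSamples σ a)
      = ∑ a, (∏ t, prodProb x (permuteSamples σ a t)) * G (permuteSamples σ a) := by
        simp only [prod_prodProb_permuteSamples]
    _ = ∑ a, (∏ t, prodProb x (a t)) * G a :=
        (permuteSamples σ).sum_comp fun a => (∏ t, prodProb x (a t)) * G a

theorem sum_sum_add_eq_mul_sum [NeZero k] (h : (Fin n → Fin k) → ℝ) :
    ∑ c : Fin n → Fin k, ∑ t : Fin k, h (fun j => t + c j) = k * ∑ τ, h τ := by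
  have htrans : ∀ t : Fin k, ∑ c : Fin n → Fin k, h (fun j => t + c j) = ∑ τ, h τ := fun t =>
    Fintype.sum_equiv (Equiv.piCongrRight fun _ => Equiv.addLeft t) _ h fun _ => rfl
  rw [sum_comm, sum_congr rfl fun t _ => htrans t, sum_const, card_univ, Fintype.card_fin,
    nsmul_eq_mul]

end Resampling

section Probability

variable {n m k : ℕ} {x : Fin n → Fin m → ℝ}

theorem PrProd_mono (hx : ∀ i, IsDist (x i)) {E F : (Fin k → Fin n → Fin m) → Prop}
    (h : ∀ a, E a → F a) : PrProd k x E ≤ PrProd k x F :=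
  sum_le_sum fun a _ => by
    by_cases hE : E a
    · simp [hE, h a hE]
    · simpa [hE] using ite_nonneg (((isDist_prodProb hx).pi k).1 a) le_rfl

theorem PrProd_exists_le (hx : ∀ i, IsDist (x i)) {ι : Type*} [Fintype ι]
    (B : ι → (Fin k → Fin n → Fin m) → Prop) :
    PrProd k x (fun a => ∃ q, B q a) ≤ ∑ q, PrProd k x (B q) := by
  refine le_of_le_of_eq (sum_le_sum fun a _ => ?_) sum_comm
  have hW : 0 ≤ ∏ t, prodProb x (a t) := ((isDist_prodProb hx).pi k).1 a
  split_ifs with h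
  · obtain ⟨q, hq⟩ := h
    have := single_le_sum (f := fun q => if B q a then ∏ t, prodProb x (a t) else 0)
      (fun q _ => ite_nonneg hW le_rfl) (mem_univ q)
    rwa [if_pos hq] at this
  · exact sum_nonneg fun q _ => ite_nonneg hW le_rfl

theorem PrProd_or_le (hx : ∀ i, IsDist (x i)) (E F : (Fin k → Fin n → Fin m) → Prop) :
    PrProd k x (fun a => E a ∨ F a) ≤ PrProd k x E + PrProd k x F := by
  simpa [Fintype.sum_bool, or_comm] using PrProd_exists_le hx fun b : Bool => if b then E else F

theorem one_sub_le_PrProd (hx : ∀ i, IsDist (x i)) {E F : (Fin k → Fin n → Fin m) → Prop}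
    {α : ℝ} (hE : PrProd k x (fun a => ¬ E a) ≤ α) (h : ∀ a, E a → F a) :
    1 - α ≤ PrProd k x F := by
  have htotal : PrProd k x E + PrProd k x (fun a => ¬ E a) = 1 := by
    rw [PrProd, PrProd, ← sum_add_distrib, ← ((isDist_prodProb hx).pi k).2]
    exact sum_congr rfl fun a _ => by by_cases h : E a <;> simp [h]
  linarith [PrProd_mono hx h]

end Probability

section Concentration

variable {n m k : ℕ} {x : Fin n → Fin m → ℝ}

def shiftSamples [NeZero k] (c : Fin n → Fin k) :
    (Fin k → Fin n → Fin m) ≃ (Fin k → Fin n → Fin m) :=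
  permuteSamples fun j => Equiv.addRight (c j)

-- Hoeffding's decomposition of the U-statistic `EU w (emp k a)`.
theorem EU_emp_sub_eq_average [NeZero k] (w : (Fin n → Fin m) → ℝ) (a : Fin k → Fin n → Fin m)
    (μ θ : ℝ) :
    k * θ * (EU w (emp k a) - μ) =
      (∑ c : Fin n → Fin k, θ * ∑ t, (w (shiftSamples c a t) - μ)) /
        Fintype.card (Fin n → Fin k) := by
  have hsum := sum_sum_add_eq_mul_sum (n := n) fun τ => w fun j => a (τ j) j
  simp only [shiftSamples, permuteSamples, Equiv.coe_fn_mk, Equiv.coe_addRight, mul_sub,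
    sum_sub_distrib, ← mul_sum, sum_const, card_univ, Fintype.card_fin, Fintype.card_fun, hsum,
    EU_emp, nsmul_eq_mul, Nat.cast_pow]
  have : (k : ℝ) ≠ 0 := NeZero.ne _
  field_simp

theorem sum_prod_prodProb_mul_exp_EU_emp_le [NeZero k] (hx : ∀ i, IsDist (x i))
    {w : (Fin n → Fin m) → ℝ} (hw : ∀ p, w p ∈ Set.Icc (0 : ℝ) 1) {θ : ℝ} (hθ : |θ| ≤ 1) :
    ∑ a, (∏ t, prodProb x (a t)) * exp (k * θ * (EU w (emp k a) - EU w x)) ≤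
      exp (k * θ ^ 2) := by
  set Y : (Fin k → Fin n → Fin m) → ℝ := fun a => θ * ∑ t, (w (a t) - EU w x)
  have hjensen : ∀ a, exp (k * θ * (EU w (emp k a) - EU w x)) ≤
      (∑ c : Fin n → Fin k, exp (Y (shiftSamples c a))) / Fintype.card (Fin n → Fin k) :=
    fun a => by rw [EU_emp_sub_eq_average]; exact exp_sum_div_card_le _
  have hshift : ∀ c : Fin n → Fin k,
      ∑ a, (∏ t, prodProb x (a t)) * exp (Y (shiftSamples c a)) ≤ exp (k * θ ^ 2) := fun c =>
    (sum_prod_prodProb_mul_comp_permuteSamples x _ fun a => exp (Y a)).trans_le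
      (sum_prod_mul_exp_sum_sub_mean_le (isDist_prodProb hx) hw k hθ)
  calc ∑ a, (∏ t, prodProb x (a t)) * exp (k * θ * (EU w (emp k a) - EU w x))
      ≤ ∑ a, (∏ t, prodProb x (a t)) * ((∑ c : Fin n → Fin k, exp (Y (shiftSamples c a))) /
          Fintype.card (Fin n → Fin k)) :=
        sum_le_sum fun a _ =>
          mul_le_mul_of_nonneg_left (hjensen a) (((isDist_prodProb hx).pi k).1 a)
    _ = (∑ c : Fin n → Fin k, ∑ a, (∏ t, prodProb x (a t)) * exp (Y (shiftSamples c a))) /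
          Fintype.card (Fin n → Fin k) := by
        simp only [mul_div_assoc', mul_sum, ← sum_div]
        rw [sum_comm]
    _ ≤ (∑ _c : Fin n → Fin k, exp (k * θ ^ 2)) / Fintype.card (Fin n → Fin k) := by
        gcongr with c
        exact hshift c
    _ = exp (k * θ ^ 2) := by
        rw [sum_const, card_univ, nsmul_eq_mul,
          mul_div_cancel_left₀ _ (Nat.cast_ne_zero.2 Fintype.card_ne_zero)]

theorem PrProd_lt_abs_EU_emp_sub_le [NeZero k] (hx : ∀ i, IsDist (x i))
    {w : (Fin n → Fin m) → ℝ} (hw : ∀ p, w p ∈ Set.Icc (0 : ℝ) 1) {s : ℝ}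
    (hs : s ∈ Set.Icc (0 : ℝ) 2) :
    PrProd k x (fun a => s < |EU w (emp k a) - EU w x|) ≤ 2 * exp (-(k * s ^ 2 / 4)) := by
  have one_sided : ∀ σ : ℝ, |σ| = 1 →
      PrProd k x (fun a => s < σ * (EU w (emp k a) - EU w x)) ≤ exp (-(k * s ^ 2 / 4)) := by
    intro σ hσ
    have hθ : |σ * s / 2| ≤ 1 := by
      rw [abs_div, abs_mul, hσ, abs_of_nonneg hs.1, abs_two]
      linarith [hs.2]
    have hσ2 : σ ^ 2 = 1 := by rw [← sq_abs, hσ, one_pow]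
    calc PrProd k x (fun a => s < σ * (EU w (emp k a) - EU w x))
        ≤ exp (-(k * s / 2 * s)) * ∑ a, (∏ t, prodProb x (a t)) *
            exp (k * s / 2 * (σ * (EU w (emp k a) - EU w x))) :=
          sum_ite_lt_le_exp_mul_sum ((isDist_prodProb hx).pi k).1 _ s (by positivity [hs.1])
      _ = exp (-(k * s / 2 * s)) * ∑ a, (∏ t, prodProb x (a t)) *
            exp (k * (σ * s / 2) * (EU w (emp k a) - EU w x)) := by
          simp only [mul_assoc, mul_left_comm σ, mul_div_assoc', div_mul_eq_mul_div]
      _ ≤ exp (-(k * s / 2 * s)) * exp (k * (σ * s / 2) ^ 2) := by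
          gcongr
          exact sum_prod_prodProb_mul_exp_EU_emp_le hx hw hθ
      _ = exp (-(k * s ^ 2 / 4)) := by
          rw [← exp_add, div_pow, mul_pow, hσ2]
          ring_nf
  calc PrProd k x (fun a => s < |EU w (emp k a) - EU w x|)
      ≤ PrProd k x (fun a => s < 1 * (EU w (emp k a) - EU w x) ∨
          s < -1 * (EU w (emp k a) - EU w x)) :=
        PrProd_mono hx fun a h => by simpa [lt_abs] using h
    _ ≤ exp (-(k * s ^ 2 / 4)) + exp (-(k * s ^ 2 / 4)) :=
        (PrProd_or_le hx _ _).trans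
          (add_le_add (one_sided 1 abs_one) (one_sided (-1) (by rw [abs_neg, abs_one])))
    _ = 2 * exp (-(k * s ^ 2 / 4)) := by ring

theorem PrProd_exists_lt_abs_EU_emp_sub_le [NeZero k] (hx : ∀ i, IsDist (x i)) {ι : Type*}
    [Fintype ι] {w : ι → (Fin n → Fin m) → ℝ} (hw : ∀ q p, w q p ∈ Set.Icc (0 : ℝ) 1) {s : ℝ}
    (hs : s ∈ Set.Icc (0 : ℝ) 2) :
    PrProd k x (fun a => ∃ q, s < |EU (w q) (emp k a) - EU (w q) x|) ≤
      Fintype.card ι * (2 * exp (-(k * s ^ 2 / 4))) := by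
  refine (PrProd_exists_le hx _).trans ?_
  simpa using sum_le_sum fun q (_ : q ∈ univ) => PrProd_lt_abs_EU_emp_sub_le (k := k) hx (hw q) hs

end Concentration

def sampleSizeBound (n m : ℕ) (ε α : ℝ) : ℝ :=
  72 / ε ^ 2 * (log (m + 1) + log n - log α - log ε + log 24)

section SampleSize

variable {n m k : ℕ} {ε α : ℝ}

theorem sampleSizeBound_pos (hε : 0 < ε ∧ ε < 1) (hα : 0 < α ∧ α < 1) :
    0 < sampleSizeBound n m ε α := by
  have hm : 0 ≤ log (m + 1) := log_nonneg (by linarith [m.cast_nonneg (α := ℝ)])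
  have hL : 0 < log (m + 1) + log n - log α - log ε + log 24 := by
    linarith [log_natCast_nonneg n, log_neg hα.1 hα.2, log_neg hε.1 hε.2,
      log_pos (by norm_num : (1 : ℝ) < 24)]
  exact mul_pos (by have := hε.1; positivity) hL

theorem ne_zero_of_sampleSizeBound_lt (hε : 0 < ε ∧ ε < 1) (hα : 0 < α ∧ α < 1)
    (hk : sampleSizeBound n m ε α < k) : k ≠ 0 := by
  exact_mod_cast ((sampleSizeBound_pos hε hα).trans hk).ne'

theorem mul_two_mul_exp_le_of_sampleSizeBound_lt (hε : 0 < ε ∧ ε < 1) (hα : 0 < α ∧ α < 1)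
    (hk : sampleSizeBound n m ε α < k) :
    (n * (m + 1) : ℝ) * (2 * exp (-(k * (ε / 4) ^ 2 / 4))) ≤ α := by
  rcases Nat.eq_zero_or_pos n with rfl | hn
  · simpa using hα.1.le
  set L := log (m + 1) + log n - log α - log ε + log 24
  have hN : (0 : ℝ) < n * (m + 1) := by positivity
  have hL : L < k * (ε / 4) ^ 2 / 4 := by
    have : 0 < L := (pos_iff_pos_of_mul_pos (show 0 < 72 / ε ^ 2 * L from
      sampleSizeBound_pos hε hα)).1 (by have := hε.1; positivity)
    rw [sampleSizeBound, div_mul_eq_mul_div, div_lt_iff₀ (by have := hε.1; positivity)] at hk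
    nlinarith
  have hexpL : exp (-L) = α * ε / (24 * (n * (m + 1))) := by
    rw [show -L = log (α * ε) - log (24 * (n * (m + 1))) by
      rw [log_mul hα.1.ne' hε.1.ne', log_mul (by norm_num) hN.ne',
        log_mul (by positivity) (by positivity)]; ring]
    rw [exp_sub, exp_log (mul_pos hα.1 hε.1), exp_log (by positivity)]
  calc (n * (m + 1) : ℝ) * (2 * exp (-(k * (ε / 4) ^ 2 / 4)))
      ≤ n * (m + 1) * (2 * exp (-L)) := by gcongr
    _ = α * ε / 12 := by rw [hexpL]; field_simp; ring
    _ ≤ α := by nlinarith [hα.1, hε.2]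

end SampleSize

theorem stmt2_general {n m : ℕ}
    (u : Fin n → (Fin n → Fin m) → ℝ)
    (hu : ∀ i a, 0 ≤ u i a ∧ u i a ≤ 1)
    (ε α δ : ℝ) (hε : 0 < ε ∧ ε < 1) (hα : 0 < α ∧ α < 1)
    (k : ℕ)
    (hk : (k : ℝ) >
      72 / ε ^ 2 *
        (Real.log (m + 1) + Real.log n - Real.log α - Real.log ε + Real.log 24)) :
    (∀ x : Fin n → Fin m → ℝ, (∀ i, IsDist (x i)) → IsNash u x δ →
      PrProd k x (fun a => IsNash u (emp k a) (δ + ε / 2)) ≥ 1 - α) ∧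
    (∀ x : Fin n → Fin m → ℝ, (∀ i, IsDist (x i)) → ¬ IsNash u x (δ + ε) →
      PrProd k x (fun a => ¬ IsNash u (emp k a) (δ + ε / 2)) ≥ 1 - α) := by
  have hk0 : k ≠ 0 := ne_zero_of_sampleSizeBound_lt hε hα hk
  have : NeZero k := ⟨hk0⟩
  have hbad : ∀ x : Fin n → Fin m → ℝ, (∀ i, IsDist (x i)) → PrProd k x (fun a => ¬ ∀ q,
      |EU (nashTestPayoff u q) (emp k a) - EU (nashTestPayoff u q) x| ≤ ε / 4) ≤ α := by
    intro x hx
    refine le_trans (PrProd_mono hx fun a h => by push Not at h; exact h) ?_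
    refine (PrProd_exists_lt_abs_EU_emp_sub_le hx (nashTestPayoff_mem_Icc hu)
      ⟨by linarith, by linarith⟩).trans ?_
    simpa using mul_two_mul_exp_le_of_sampleSizeBound_lt hε hα hk
  refine ⟨fun x hx hnash => one_sub_le_PrProd hx (hbad x hx) fun a ha => ?_,
    fun x hx hfar => one_sub_le_PrProd hx (hbad x hx) fun a ha hemp => hfar ?_⟩
  · refine (hnash.of_abs_EU_sub_le (η := ε / 4) (fun i => (hx i).2) (emp_sum_eq_one hk0 a)
      fun q => ?_).mono (by linarith)
    rw [abs_sub_comm]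
    exact ha q
  · exact (hemp.of_abs_EU_sub_le (emp_sum_eq_one hk0 a) (fun i => (hx i).2) ha).mono (by linarith)

/-- The test that outputs YES iff the product empirical distribution of
the `k` observed action profiles is a `(δ + ε/2)`-Nash equilibrium is an `ε`-test with
error probability `α` for `δ`-Nash equilibrium, whenever
`k > (72/ε²)(ln(m+1) + ln n − ln α − ln ε + ln 24)`: for every product distribution `x`,
if `x` is a `δ`-Nash equilibrium the test answers YES with probability ≥ `1 − α`, and if
`x` is not a `(δ+ε)`-Nash equilibrium the test answers NO with probability ≥ `1 − α`. -/
theorem stmt2 {n m : ℕ} (hn : 0 < n) (hm : 0 < m)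
    (u : Fin n → (Fin n → Fin m) → ℝ)
    (hu : ∀ i a, 0 ≤ u i a ∧ u i a ≤ 1)
    (ε α δ : ℝ) (hε : 0 < ε ∧ ε < 1) (hα : 0 < α ∧ α < 1) (hδ : 0 ≤ δ)
    (k : ℕ)
    (hk : (k : ℝ) >
      72 / ε ^ 2 *
        (Real.log (m + 1) + Real.log n - Real.log α - Real.log ε + Real.log 24)) :
    (∀ x : Fin n → Fin m → ℝ, (∀ i, IsDist (x i)) → IsNash u x δ →
      PrProd k x (fun a => IsNash u (emp k a) (δ + ε / 2)) ≥ 1 - α) ∧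
    (∀ x : Fin n → Fin m → ℝ, (∀ i, IsDist (x i)) → ¬ IsNash u x (δ + ε) →
      PrProd k x (fun a => ¬ IsNash u (emp k a) (δ + ε / 2)) ≥ 1 - α) :=
  stmt2_general u hu ε α δ hε hα k hk
end
end

section
/- Fix ε, α ∈ (0,1) and δ ≥ 0, and let T be the test that, on k observed action profiles, outputs YES if their empirical distribution s^k is a (δ + ε/2)-coarse correlated equilibrium and NO otherwise. If k > (8/ε²)(ln m + ln n − ln α), then T is an ε-test with error probability α for δ-coarse correlated equilibrium: for every distribution x ∈ Δ(A), if x is a δ-coarse correlated equilibrium then T outputs YES with probability at least 1 − α, and if x is not a (δ+ε)-coarse correlated equilibrium then T outputs NO with probability at least 1 − α (probabilities over k i.i.d. samples from x). -/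
open Finset

open scoped Classical

noncomputable section

/-- Empirical distribution of `k` sampled elements of `A`. -/
def empJoint {A : Type*} [Fintype A] [DecidableEq A] (k : ℕ) (a : Fin k → A) : A → ℝ :=
  fun p => ((univ.filter fun t => a t = p).card : ℝ) / k

/-- Probability of the event `E` over `k` i.i.d. samples from the distribution `x`. -/
def PrJoint {A : Type*} [Fintype A] (k : ℕ) (x : A → ℝ) (E : (Fin k → A) → Prop) : ℝ :=
  ∑ a : Fin k → A, if E a then ∏ t, x (a t) else 0

/-- `x ∈ Δ(A)` is an `ε`-coarse correlated equilibrium of the game `u`: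
for every player `i` and action `j`, the expected regret for not playing `j`
is at most `ε`. -/
def IsCCE {n m : ℕ} (u : Fin n → (Fin n → Fin m) → ℝ)
    (x : (Fin n → Fin m) → ℝ) (ε : ℝ) : Prop :=
  ∀ (i : Fin n) (j : Fin m),
    ∑ a : Fin n → Fin m, x a * (u i (Function.update a i j) - u i a) ≤ ε

/-- `x ∈ Δ(A)` is an `ε`-correlated equilibrium of the game `u`:
for every player `i` and deviation map `f : [m] → [m]`, the expected regret is
at most `ε`. -/
def IsCE {n m : ℕ} (u : Fin n → (Fin n → Fin m) → ℝ)
    (x : (Fin n → Fin m) → ℝ) (ε : ℝ) : Prop :=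
  ∀ (i : Fin n) (f : Fin m → Fin m),
    ∑ a : Fin n → Fin m, x a * (u i (Function.update a i (f (a i))) - u i a) ≤ ε

/-- A distribution on a finite set is `k`-uniform if every probability is an integer
multiple of `1/k` (equivalently, it is uniform over a size-`k` multiset). -/
def IsKUniform {A : Type*} [Fintype A] (k : ℕ) (x : A → ℝ) : Prop :=
  ∀ a, ∃ c : ℕ, x a = (c : ℝ) / k

/-!
`PrJoint k x` is the `k`-fold product of the law of `x`, so Hoeffding's inequality applies to
the empirical mean of any bounded function of the sampled profile. Each regret `R_j^i` lies in
`[-1, 1]`, so its empirical mean exceeds its true mean by `ε/2` with probability at most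
`exp(-kε²/8)`, and the bound on `k` makes this at most `α/(nm)`. A union bound over the `nm`
pairs `(i, j)` gives the YES direction; for the NO direction one violated pair `(i, j)`
suffices, applying the same bound to `-R_j^i`.
-/

open MeasureTheory ProbabilityTheory

section Sampling

variable {A : Type*} [Fintype A] {x : A → ℝ}

lemma IsDist.sum_ofReal (hx : IsDist x) : ∑ a, ENNReal.ofReal (x a) = 1 := by
  rw [← ENNReal.ofReal_sum_of_nonneg fun a _ => hx.1 a, hx.2, ENNReal.ofReal_one]

def IsDist.toPMF (hx : IsDist x) : PMF A :=
  PMF.ofFintype (fun a => ENNReal.ofReal (x a)) hx.sum_ofReal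

section Measure

variable [MeasurableSpace A] [MeasurableSingletonClass A]

lemma IsDist.toMeasure_real_singleton (hx : IsDist x) (a : A) :
    hx.toPMF.toMeasure.real {a} = x a := by
  simp [measureReal_def, PMF.toMeasure_apply_singleton _ _ (measurableSet_singleton a),
    IsDist.toPMF, hx.1 a]

lemma IsDist.integral_toMeasure (hx : IsDist x) (g : A → ℝ) :
    ∫ a, g a ∂hx.toPMF.toMeasure = ∑ a, x a * g a := by
  simp [integral_fintype (Integrable.of_finite), hx.toMeasure_real_singleton]

lemma PrJoint_eq_measureReal (hx : IsDist x) (k : ℕ) (E : (Fin k → A) → Prop) :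
    PrJoint k x E = (Measure.pi fun _ : Fin k => hx.toPMF.toMeasure).real {ω | E ω} := by
  have hset : {ω | E ω} = ((univ.filter E : Finset (Fin k → A)) : Set (Fin k → A)) := by
    simp
  rw [hset, ← sum_measureReal_singleton, PrJoint, sum_filter]
  refine sum_congr rfl fun ω _ => ?_
  rw [measureReal_def, Measure.pi_singleton, ENNReal.toReal_prod]
  simp only [← measureReal_def, hx.toMeasure_real_singleton]

end Measure

lemma PrJoint_not (hx : IsDist x) (k : ℕ) (E : (Fin k → A) → Prop) :
    PrJoint k x (fun ω => ¬ E ω) = 1 - PrJoint k x E := by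
  let _ : MeasurableSpace A := ⊤
  rw [PrJoint_eq_measureReal hx, PrJoint_eq_measureReal hx, ← Set.compl_ofPred,
    probReal_compl_eq_one_sub MeasurableSet.of_discrete]

lemma PrJoint_mono (hx : IsDist x) {k : ℕ} {E F : (Fin k → A) → Prop}
    (h : ∀ ω, E ω → F ω) : PrJoint k x E ≤ PrJoint k x F := by
  let _ : MeasurableSpace A := ⊤
  simp only [PrJoint_eq_measureReal hx]
  exact measureReal_mono h

lemma PrJoint_exists_le {B : Type*} [Fintype B] (hx : IsDist x) {k : ℕ}
    (E : B → (Fin k → A) → Prop) :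
    PrJoint k x (fun ω => ∃ b, E b ω) ≤ ∑ b, PrJoint k x (E b) := by
  let _ : MeasurableSpace A := ⊤
  simp only [PrJoint_eq_measureReal hx, Set.ofPred_exists]
  exact measureReal_iUnion_fintype_le _

theorem PrJoint_hoeffding (hx : IsDist x) {g : A → ℝ} {a b : ℝ} (hg : ∀ p, g p ∈ Set.Icc a b)
    (k : ℕ) {t : ℝ} (ht : 0 ≤ t) :
    PrJoint k x (fun ω => k * ∑ p, x p * g p + t ≤ ∑ i, g (ω i)) ≤
      Real.exp (-2 * t ^ 2 / (k * (b - a) ^ 2)) := by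
  let _ : MeasurableSpace A := ⊤
  set μ := hx.toPMF.toMeasure
  have hsub (i : Fin k) : HasSubgaussianMGF (fun ω : Fin k → A => g (ω i) - ∑ p, x p * g p)
      ((‖b - a‖₊ / 2) ^ 2) (Measure.pi fun _ => μ) := by
    have h := hasSubgaussianMGF_of_mem_Icc (μ := μ) (measurable_of_finite g).aemeasurable
      (ae_of_all _ hg)
    rw [hx.integral_toMeasure, ← (measurePreserving_eval (fun _ => μ) i).map_eq] at h
    exact h.of_map (measurable_of_finite _).aemeasurable
  have hindep : iIndepFun (fun i (ω : Fin k → A) => g (ω i) - ∑ p, x p * g p)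
      (Measure.pi fun _ => μ) :=
    iIndepFun_pi (X := fun _ p => g p - ∑ q, x q * g q) fun _ =>
      (measurable_of_finite _).aemeasurable
  have h := HasSubgaussianMGF.measure_sum_ge_le_of_iIndepFun hindep (s := univ)
    (fun i _ => hsub i) ht
  rw [PrJoint_eq_measureReal hx]
  convert h using 2
  · ext ω
    simp only [Set.mem_ofPred_eq, sum_sub_distrib, sum_const, card_univ, Fintype.card_fin,
      nsmul_eq_mul]
    constructor <;> intro <;> linarith
  · simp only [sum_const, card_univ, Fintype.card_fin, nsmul_eq_mul]
    push_cast
    rw [Real.norm_eq_abs, div_pow, sq_abs,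
      show (2 : ℝ) * (k * ((b - a) ^ 2 / 2 ^ 2)) = k * (b - a) ^ 2 / 2 by ring,
      div_div_eq_mul_div]
    ring

lemma sum_empJoint_mul [DecidableEq A] (k : ℕ) (ω : Fin k → A) (g : A → ℝ) :
    ∑ p, empJoint k ω p * g p = (∑ t, g (ω t)) / k := by
  rw [← sum_fiberwise' univ ω g, sum_div]
  refine sum_congr rfl fun p _ => ?_
  rw [sum_const, nsmul_eq_mul, empJoint]
  ring

theorem PrJoint_hoeffding_empJoint [DecidableEq A] (hx : IsDist x) {g : A → ℝ} {a b : ℝ}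
    (hg : ∀ p, g p ∈ Set.Icc a b) {k : ℕ} (hk : 0 < k) {s : ℝ} (hs : 0 ≤ s) :
    PrJoint k x (fun ω => ∑ p, x p * g p + s ≤ ∑ p, empJoint k ω p * g p) ≤
      Real.exp (-2 * k * s ^ 2 / (b - a) ^ 2) := by
  have hk' : (0 : ℝ) < k := by exact_mod_cast hk
  calc _ = PrJoint k x (fun ω => k * ∑ p, x p * g p + k * s ≤ ∑ i, g (ω i)) := by
        simp only [sum_empJoint_mul, le_div_iff₀ hk', add_mul, mul_comm (k : ℝ)]
    _ ≤ Real.exp (-2 * (k * s) ^ 2 / (k * (b - a) ^ 2)) :=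
        PrJoint_hoeffding hx hg k (by positivity)
    _ = _ := by
      congr 1
      field_simp

end Sampling

lemma mul_exp_neg_le_of_log_sub_log_lt {N α c : ℝ} (hN : 0 < N) (hα : 0 < α)
    (h : Real.log N - Real.log α < c) : N * Real.exp (-c) ≤ α := by
  have : Real.exp (-c) ≤ α / N := by
    rw [← Real.exp_log (div_pos hα hN), Real.log_div hα.ne' hN.ne']
    exact Real.exp_le_exp.2 (by linarith)
  rwa [le_div_iff₀ hN, mul_comm] at this

section Game

variable {n m : ℕ} {u : Fin n → (Fin n → Fin m) → ℝ} {x : (Fin n → Fin m) → ℝ} {k : ℕ}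
  {δ ε : ℝ}

def regret (u : Fin n → (Fin n → Fin m) → ℝ) (i : Fin n) (j : Fin m) (a : Fin n → Fin m) :
    ℝ :=
  u i (Function.update a i j) - u i a

lemma isCCE_iff : IsCCE u x ε ↔ ∀ i j, ∑ a, x a * regret u i j a ≤ ε := Iff.rfl

lemma regret_mem_Icc (hu : ∀ i a, 0 ≤ u i a ∧ u i a ≤ 1) (i : Fin n) (j : Fin m)
    (a : Fin n → Fin m) : regret u i j a ∈ Set.Icc (-1) 1 := by
  have h₁ := hu i (Function.update a i j)
  have h₂ := hu i a
  constructor <;> unfold regret <;> linarith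

lemma PrJoint_add_half_le_empJoint {g : (Fin n → Fin m) → ℝ}
    (hg : ∀ a, g a ∈ Set.Icc (-1) 1) (hx : IsDist x) (hk : 0 < k) (hε : 0 ≤ ε) :
    PrJoint k x (fun ω => ∑ a, x a * g a + ε / 2 ≤ ∑ a, empJoint k ω a * g a) ≤
      Real.exp (-(k * ε ^ 2 / 8)) := by
  refine (PrJoint_hoeffding_empJoint hx hg hk (by positivity)).trans_eq ?_
  congr 1
  ring

lemma PrJoint_not_isCCE_le (hu : ∀ i a, 0 ≤ u i a ∧ u i a ≤ 1) (hx : IsDist x)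
    (hcce : IsCCE u x δ) (hk : 0 < k) (hε : 0 ≤ ε) :
    PrJoint k x (fun ω => ¬ IsCCE u (empJoint k ω) (δ + ε / 2)) ≤
      n * m * Real.exp (-(k * ε ^ 2 / 8)) := by
  calc _ ≤ PrJoint k x (fun ω => ∃ ij : Fin n × Fin m,
        ∑ a, x a * regret u ij.1 ij.2 a + ε / 2 ≤ ∑ a, empJoint k ω a * regret u ij.1 ij.2 a) :=
        PrJoint_mono hx fun ω hω => by
          obtain ⟨i, j, hij⟩ := by simpa only [isCCE_iff, not_forall, not_le] using hω
          refine ⟨(i, j), ?_⟩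
          dsimp only
          linarith [isCCE_iff.1 hcce i j]
    _ ≤ ∑ ij : Fin n × Fin m, PrJoint k x (fun ω =>
        ∑ a, x a * regret u ij.1 ij.2 a + ε / 2 ≤ ∑ a, empJoint k ω a * regret u ij.1 ij.2 a) :=
        PrJoint_exists_le hx _
    _ ≤ ∑ _ij : Fin n × Fin m, Real.exp (-(k * ε ^ 2 / 8)) :=
        sum_le_sum fun ij _ =>
          PrJoint_add_half_le_empJoint (regret_mem_Icc hu ij.1 ij.2) hx hk hε
    _ = _ := by simp [mul_assoc]

lemma PrJoint_isCCE_le (hu : ∀ i a, 0 ≤ u i a ∧ u i a ≤ 1) (hx : IsDist x)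
    (hnot : ¬ IsCCE u x (δ + ε)) (hk : 0 < k) (hε : 0 ≤ ε) :
    PrJoint k x (fun ω => IsCCE u (empJoint k ω) (δ + ε / 2)) ≤
      Real.exp (-(k * ε ^ 2 / 8)) := by
  obtain ⟨i, j, hij⟩ := by simpa only [isCCE_iff, not_forall, not_le] using hnot
  calc _ ≤ PrJoint k x (fun ω =>
        ∑ a, x a * -regret u i j a + ε / 2 ≤ ∑ a, empJoint k ω a * -regret u i j a) :=
        PrJoint_mono hx fun ω hω => by
          simp only [mul_neg, sum_neg_distrib]
          linarith [isCCE_iff.1 hω i j]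
    _ ≤ _ := PrJoint_add_half_le_empJoint
        (fun a => Set.neg_mem_Icc_iff.2 (by simpa using regret_mem_Icc hu i j a)) hx hk hε

end Game

theorem stmt7_general {n m : ℕ} (hn : 0 < n) (hm : 0 < m)
    (u : Fin n → (Fin n → Fin m) → ℝ)
    (hu : ∀ i a, 0 ≤ u i a ∧ u i a ≤ 1)
    (ε α δ : ℝ) (hε : 0 < ε ∧ ε < 1) (hα : 0 < α ∧ α < 1)
    (k : ℕ)
    (hk : (k : ℝ) > 8 / ε ^ 2 * (Real.log m + Real.log n - Real.log α)) :
    (∀ x : (Fin n → Fin m) → ℝ, IsDist x → IsCCE u x δ →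
      PrJoint k x (fun a => IsCCE u (empJoint k a) (δ + ε / 2)) ≥ 1 - α) ∧
    (∀ x : (Fin n → Fin m) → ℝ, IsDist x → ¬ IsCCE u x (δ + ε) →
      PrJoint k x (fun a => ¬ IsCCE u (empJoint k a) (δ + ε / 2)) ≥ 1 - α) := by
  obtain ⟨hε0, -⟩ := hε
  have hnm : (1 : ℝ) ≤ n * m := by exact_mod_cast Nat.mul_pos hn hm
  have hlog : Real.log (n * m) - Real.log α < k * ε ^ 2 / 8 := by
    rw [Real.log_mul (by positivity) (by positivity)]
    rw [gt_iff_lt, div_mul_eq_mul_div, div_lt_iff₀ (by positivity)] at hk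
    linarith
  have hk0 : 0 < k := by
    have hlog_nm := Real.log_nonneg hnm
    have hlog_α := Real.log_neg hα.1 hα.2
    exact_mod_cast (show (0 : ℝ) < k by nlinarith)
  have htail := mul_exp_neg_le_of_log_sub_log_lt (by positivity) hα.1 hlog
  refine ⟨fun x hx hcce => ?_, fun x hx hnot => ?_⟩
  · have hfail := PrJoint_not_isCCE_le hu hx hcce hk0 hε0.le
    rw [PrJoint_not hx] at hfail
    linarith
  · have hpass := PrJoint_isCCE_le hu hx hnot hk0 hε0.le
    have hexp := le_mul_of_one_le_left (Real.exp_pos (-(k * ε ^ 2 / 8))).le hnm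
    rw [PrJoint_not hx]
    linarith

/-- The test that outputs YES iff the empirical distribution of the
`k` observed action profiles is a `(δ + ε/2)`-coarse correlated equilibrium is an
`ε`-test with error probability `α` for `δ`-coarse correlated equilibrium whenever
`k > (8/ε²)(ln m + ln n − ln α)`: if `x` is a `δ`-CCE the test answers YES with
probability ≥ `1 − α`; if `x` is not a `(δ+ε)`-CCE it answers NO with probability
≥ `1 − α`. -/
theorem stmt7 {n m : ℕ} (hn : 0 < n) (hm : 0 < m)
    (u : Fin n → (Fin n → Fin m) → ℝ)
    (hu : ∀ i a, 0 ≤ u i a ∧ u i a ≤ 1)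
    (ε α δ : ℝ) (hε : 0 < ε ∧ ε < 1) (hα : 0 < α ∧ α < 1) (hδ : 0 ≤ δ)
    (k : ℕ)
    (hk : (k : ℝ) > 8 / ε ^ 2 * (Real.log m + Real.log n - Real.log α)) :
    (∀ x : (Fin n → Fin m) → ℝ, IsDist x → IsCCE u x δ →
      PrJoint k x (fun a => IsCCE u (empJoint k a) (δ + ε / 2)) ≥ 1 - α) ∧
    (∀ x : (Fin n → Fin m) → ℝ, IsDist x → ¬ IsCCE u x (δ + ε) →
      PrJoint k x (fun a => ¬ IsCCE u (empJoint k a) (δ + ε / 2)) ≥ 1 - α) :=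
  stmt7_general hn hm u hu ε α δ hε hα k hk
end
end
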